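/- Along any solution of the guiding-vector-field dynamics the path-following error decreases monotonically: if ξ : I → ℝⁿ is differentiable on an interval I with ξ′(t) = χ(ξ(t)) for all t ∈ I, then the function V(t) = ½ e(ξ(t))ᵀ K e(ξ(t)) is differentiable with V′(t) = −‖N(ξ(t)) K e(ξ(t))‖² ≤ 0 for all t ∈ I. -/

import Mathlib

/-- The generalized cross product of `n` vectors `p 0, …, p (n-1)` in `ℝ^(n+1)`:
its `k`-th component is `(-1)^k` times the determinant of the `n × n` matrix obtained
from the `n × (n+1)` matrix with rows `p i` by deleting the `k`-th column. -/
noncomputable def gcross {n : ℕ} (p : Fin n → EuclideanSpace ℝ (Fin (n + 1))) :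
    EuclideanSpace ℝ (Fin (n + 1)) :=
  WithLp.toLp 2 fun (k : Fin (n + 1)) => (-1 : ℝ) ^ (k : ℕ) * Matrix.det (Matrix.of fun i j => p i (Fin.succAbove k j))


open RealInnerProductSpace in
/-- The generalized cross product is orthogonal to each of its arguments. -/
lemma inner_gcross_eq_zero {n : ℕ} (p : Fin n → EuclideanSpace ℝ (Fin (n + 1))) (i : Fin n) :
    ⟪p i, gcross p⟫ = 0 := by
  have h1 : ⟪p i, gcross p⟫ = ∑ k, p i k * gcross p k := by
    simp [PiLp.inner_apply, RCLike.inner_apply]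
    exact Finset.sum_congr rfl fun _ _ => mul_comm _ _
  set M : Matrix (Fin (n+1)) (Fin (n+1)) ℝ :=
    Matrix.of (Fin.cons (fun k => p i k) (fun r k => p r k)) with hM
  have hdet : M.det = 0 := by
    apply Matrix.det_zero_of_row_eq (i := 0) (j := i.succ)
      (fun h => (Fin.succ_ne_zero i) h.symm)
    funext k
    simp [hM, Fin.cons_zero, Fin.cons_succ]
  calc ⟪p i, gcross p⟫ = ∑ k, p i k * gcross p k := h1
    _ = ∑ k : Fin (n+1), (-1:ℝ)^(k:ℕ) * M 0 k * (M.submatrix Fin.succ k.succAbove).det := by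
        refine Finset.sum_congr rfl fun k _ => ?_
        have hsub : (M.submatrix Fin.succ k.succAbove) =
            Matrix.of (fun r j => p r (Fin.succAbove k j)) := by
          ext r j
          simp [hM, Matrix.submatrix, Fin.cons_succ]
        rw [hsub]
        have hM0 : M 0 k = p i k := by simp [hM]
        rw [hM0, gcross]
        simp only [WithLp.ofLp_toLp]
        ring
    _ = M.det := (Matrix.det_succ_row_zero M).symm
    _ = 0 := hdet

/-- The guiding vector field `χ(ξ) = ×(∇φ₁(ξ), …, ∇φₙ(ξ)) − N(ξ) K e(ξ)`, where
`N(ξ) K e(ξ) = ∑ i, kᵢ φᵢ(ξ) ∇φᵢ(ξ)`. -/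
noncomputable def gvf {n : ℕ} (φ : Fin n → EuclideanSpace ℝ (Fin (n + 1)) → ℝ)
    (kg : Fin n → ℝ) (ξ : EuclideanSpace ℝ (Fin (n + 1))) : EuclideanSpace ℝ (Fin (n + 1)) :=
  gcross (fun i => gradient (φ i) ξ) - ∑ i, (kg i * φ i ξ) • gradient (φ i) ξ

/-- Along any solution of `ξ' = χ(ξ)` on an interval `I`, the Lyapunov function
`V(t) = ½ e(ξ(t))ᵀ K e(ξ(t))` is differentiable with
`V'(t) = −‖N(ξ(t)) K e(ξ(t))‖² ≤ 0`. -/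
theorem lyapunov_decreases_along_solutions {n : ℕ} (hn : 1 ≤ n)
    (φ : Fin n → EuclideanSpace ℝ (Fin (n + 1)) → ℝ)
    (hφ : ∀ i, ContDiff ℝ 2 (φ i)) (kg : Fin n → ℝ) (hk : ∀ i, 0 < kg i)
    (I : Set ℝ) (hI : I.OrdConnected)
    (ξ : ℝ → EuclideanSpace ℝ (Fin (n + 1)))
    (hξ : ∀ t ∈ I, HasDerivWithinAt ξ (gvf φ kg (ξ t)) I t) :
    ∀ t ∈ I,
      HasDerivWithinAt (fun s => (1 / 2 : ℝ) * ∑ i, kg i * (φ i (ξ s)) ^ 2)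
        (-‖∑ i, (kg i * φ i (ξ t)) • gradient (φ i) (ξ t)‖ ^ 2) I t ∧
      (-‖∑ i, (kg i * φ i (ξ t)) • gradient (φ i) (ξ t)‖ ^ 2 ≤ 0) := by
  intro t ht
  set x := ξ t with hx
  set g : Fin n → EuclideanSpace ℝ (Fin (n+1)) := fun i => gradient (φ i) x with hg
  set v : EuclideanSpace ℝ (Fin (n+1)) := ∑ i, (kg i * φ i x) • g i with hv
  set d : Fin n → ℝ := fun i => @inner ℝ _ _ (g i) (gvf φ kg x) with hd
  have hcomp : ∀ i, HasDerivWithinAt (fun s => φ i (ξ s)) (d i) I t := by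
    intro i
    have hdiff : DifferentiableAt ℝ (φ i) x :=
      ((hφ i).differentiable (by norm_num)).differentiableAt
    have hgr : HasFDerivAt (φ i)
        ((InnerProductSpace.toDual ℝ (EuclideanSpace ℝ (Fin (n+1)))) (g i)) x :=
      hdiff.hasGradientAt
    have h := hgr.comp_hasDerivWithinAt t (hξ t ht)
    exact h
  have hV : HasDerivWithinAt (fun s => (1 / 2 : ℝ) * ∑ i, kg i * (φ i (ξ s)) ^ 2)
      ((1/2 : ℝ) * ∑ i, kg i * ((2:ℕ) * (φ i x) ^ 1 * d i)) I t := by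
    apply HasDerivWithinAt.const_mul
    apply HasDerivWithinAt.fun_sum
    intro i _
    exact ((hcomp i).pow 2).const_mul (kg i)
  have key : (1/2 : ℝ) * ∑ i, kg i * ((2:ℕ) * (φ i x) ^ 1 * d i) = -‖v‖^2 := by
    have h1 : (1/2 : ℝ) * ∑ i, kg i * ((2:ℕ) * (φ i x) ^ 1 * d i)
        = ∑ i, (kg i * φ i x) * d i := by
      rw [Finset.mul_sum]
      refine Finset.sum_congr rfl fun i _ => ?_
      push_cast
      ring
    have h2 : ∑ i, (kg i * φ i x) * d i = @inner ℝ _ _ v (gvf φ kg x) := by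
      rw [hv, sum_inner]
      refine Finset.sum_congr rfl fun i _ => ?_
      rw [real_inner_smul_left, hd]
    have h0 : @inner ℝ _ _ v (gcross (fun i => gradient (φ i) x)) = 0 := by
      rw [hv, sum_inner]
      refine Finset.sum_eq_zero fun i _ => ?_
      rw [real_inner_smul_left, hg]
      simp [inner_gcross_eq_zero (fun i => gradient (φ i) x) i]
    have h3 : @inner ℝ _ _ v (gvf φ kg x) = -‖v‖^2 := by
      have hvv : (∑ i, (kg i * φ i x) • gradient (φ i) x) = v := rfl
      rw [gvf, inner_sub_right, h0, hvv, real_inner_self_eq_norm_sq]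
      ring
    rw [h1, h2, h3]
  refine ⟨?_, neg_nonpos.2 (sq_nonneg _)⟩
  rw [← key]
  exact hV
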